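/- The ordering of the Apollonian alphabet by the index n is natural: the quantity ‖φ'_{k,n}‖_∞ = max_{z∈𝔻}|φ'_{k,n}(z)| does not depend on k, and for all k₁, k₂ ∈ {1,…,6} and positive integers n₁ ≤ n₂ one has ‖φ'_{k₁,n₁}‖_∞ ≥ ‖φ'_{k₂,n₂}‖_∞. -/

import Mathlib

/-!
`f` is parabolic with fixed point `1`, and by induction
`f^n(z) = ((λ - n) z + n) / (n (1 - z) + λ)` near the half-plane `Re z ≤ 1`: a Möbius map of
determinant `λ² = 3`. Hence `|φ'_{k,n}(z)| = 3 / |n (1 - w) + λ|² · 3 / |1 - z + λ|²` with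
`w = e^{iθ_k} f(z)`. A direct computation shows that `f` maps `Re z ≤ 1` into `𝔻`, so `Re w ≤ 1`,
and then `|n (1 - w) + λ|` is nondecreasing in `n`. Independence of `k` holds because
`θ_k = ±2π/3` and conjugation, which preserves `𝔻`, turns the formula for `θ` into the one for `-θ`.
-/

open Complex Metric Set
open scoped ENNReal

noncomputable section

/-- λ = √3 -/
def lam : ℝ := Real.sqrt 3

/-- The Möbius map f(z) = ((λ−1)z+1)/(−z+λ+1). -/
def apolF : ℂ → ℂ := fun z => (((lam : ℂ) - 1) * z + 1) / (-z + (lam : ℂ) + 1)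

/-- Rotation by angle θ. -/
def Rot (θ : ℝ) : ℂ → ℂ := fun z => Complex.exp ((θ : ℂ) * Complex.I) * z

/-- θ_k = (−1)^k · 2π/3 -/
def thetaA (k : ℕ) : ℝ := (-1 : ℝ) ^ k * (2 * Real.pi / 3)

/-- θ'_k = 2πk/3 -/
def thetaB (k : ℕ) : ℝ := 2 * Real.pi * k / 3

/-- The Apollonian generators φ_{k,n} = R_{θ'_k} ∘ f^n ∘ R_{θ_k} ∘ f. -/
def phi (k n : ℕ) : ℂ → ℂ := Rot (thetaB k) ∘ (apolF^[n]) ∘ Rot (thetaA k) ∘ apolF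

/-- The closed unit disk 𝔻. -/
def unitD : Set ℂ := Metric.closedBall (0 : ℂ) 1

/-- ‖φ'_{k,n}‖_∞ = max over the closed unit disk of |φ'_{k,n}|. -/
def Dnorm (k n : ℕ) : ℝ := sSup ((fun z => ‖deriv (phi k n) z‖) '' unitD)


open Filter Topology ComplexConjugate

lemma lam_pos : 0 < lam := Real.sqrt_pos.2 (by norm_num)

lemma lam_sq : lam ^ 2 = 3 := Real.sq_sqrt (by norm_num)

def den (n : ℕ) (z : ℂ) : ℂ := n * (1 - z) + lam

def moeb (n : ℕ) (z : ℂ) : ℂ := ((lam - n) * z + n) / den n z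

lemma den_re (n : ℕ) (z : ℂ) : (den n z).re = n * (1 - z.re) + lam := by
  simp [den]

lemma den_ne_zero {n : ℕ} {z : ℂ} (h : n * (z.re - 1) < lam) : den n z ≠ 0 := by
  intro h0
  have := den_re n z
  rw [h0, zero_re] at this
  linarith

lemma lam_le_norm_den (n : ℕ) {z : ℂ} (hz : z.re ≤ 1) : lam ≤ ‖den n z‖ :=
  calc lam ≤ (den n z).re := by
        rw [den_re]; nlinarith [(n.cast_nonneg : (0 : ℝ) ≤ n)]
    _ ≤ ‖den n z‖ := re_le_norm _

lemma normSq_den (n : ℕ) (z : ℂ) :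
    normSq (den n z) = (n * (1 - z.re) + lam) ^ 2 + n ^ 2 * z.im ^ 2 := by
  simp [normSq_apply, den]
  ring

lemma norm_den_mono {n₁ n₂ : ℕ} (h : n₁ ≤ n₂) {z : ℂ} (hz : z.re ≤ 1) :
    ‖den n₁ z‖ ≤ ‖den n₂ z‖ := by
  have hz' : 0 ≤ 1 - z.re := sub_nonneg.2 hz
  have hsq : normSq (den n₁ z) ≤ normSq (den n₂ z) := by
    rw [normSq_den, normSq_den]
    gcongr
    exact add_nonneg (by positivity) lam_pos.le
  simpa [norm_def] using Real.sqrt_le_sqrt hsq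

lemma apolF_eq_moeb_one : apolF = moeb 1 := by
  funext z
  simp only [apolF, moeb, den, Nat.cast_one]
  ring_nf

lemma apolF_moeb {n : ℕ} {z : ℂ} (h₀ : den n z ≠ 0) :
    apolF (moeb n z) = moeb (n + 1) z := by
  have hl : (lam : ℂ) ≠ 0 := ofReal_ne_zero.2 lam_pos.ne'
  have hnum : (lam - 1) * moeb n z + 1 = lam * ((lam - (n + 1 : ℕ)) * z + (n + 1 : ℕ)) / den n z := by
    rw [eq_div_iff h₀, add_mul, mul_assoc, moeb, div_mul_cancel₀ _ h₀, den]
    push_cast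
    ring
  have hden : -moeb n z + lam + 1 = lam * den (n + 1) z / den n z := by
    rw [eq_div_iff h₀, add_mul, add_mul, neg_mul, moeb, div_mul_cancel₀ _ h₀, den, den]
    push_cast
    ring
  rw [apolF, hnum, hden, div_div_div_cancel_right₀ h₀, mul_div_mul_left _ _ hl, moeb]

lemma iterate_apolF_eq_moeb (n : ℕ) {z : ℂ} (hz : n * (z.re - 1) < lam) :
    apolF^[n] z = moeb n z := by
  induction n with
  | zero => simp [moeb, den, ofReal_ne_zero.2 lam_pos.ne']
  | succ n ih =>
    have hn : n * (z.re - 1) < lam := by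
      push_cast at hz
      rcases le_total (z.re - 1) 0 with h | h <;> nlinarith [lam_pos]
    rw [Function.iterate_succ_apply', ih hn, apolF_moeb (den_ne_zero hn)]

lemma iterate_apolF_eventuallyEq (n : ℕ) {z : ℂ} (hz : z.re ≤ 1) :
    apolF^[n] =ᶠ[𝓝 z] moeb n := by
  have hopen : IsOpen {w : ℂ | n * (w.re - 1) < lam} :=
    isOpen_lt (by fun_prop) continuous_const
  have hmem : n * (z.re - 1) < lam := by
    nlinarith [lam_pos, (n.cast_nonneg : (0 : ℝ) ≤ n)]
  filter_upwards [hopen.mem_nhds hmem] with w hw using iterate_apolF_eq_moeb n hw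

lemma hasDerivAt_moeb {n : ℕ} {z : ℂ} (hz : den n z ≠ 0) :
    HasDerivAt (moeb n) (3 / den n z ^ 2) z := by
  have hnum : HasDerivAt (fun w : ℂ => (lam - n) * w + n) (lam - n) z := by
    simpa using ((hasDerivAt_id z).const_mul ((lam : ℂ) - n)).add_const (n : ℂ)
  have hden : HasDerivAt (fun w : ℂ => n * (1 - w) + lam) (-n) z := by
    simpa using (((hasDerivAt_id z).const_sub 1).const_mul (n : ℂ)).add_const (lam : ℂ)
  refine (hnum.div hden hz).congr_deriv ?_
  have hsq : (lam : ℂ) ^ 2 = 3 := by exact_mod_cast lam_sq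
  rw [← hsq, den]
  ring

lemma hasDerivAt_iterate_apolF (n : ℕ) {z : ℂ} (hz : z.re ≤ 1) :
    HasDerivAt apolF^[n] (3 / den n z ^ 2) z :=
  (hasDerivAt_moeb (den_ne_zero (by nlinarith [lam_pos, (n.cast_nonneg : (0 : ℝ) ≤ n)]))
    ).congr_of_eventuallyEq (iterate_apolF_eventuallyEq n hz)

lemma norm_apolF_le_one {z : ℂ} (hz : z.re ≤ 1) : ‖apolF z‖ ≤ 1 := by
  have hd : den 1 z ≠ 0 := den_ne_zero (by simp; linarith [lam_pos])
  have hlam : 3 ≤ 2 * lam := by nlinarith [lam_sq, lam_pos]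
  have hsq : normSq (den 1 z) - normSq ((lam - 1) * z + 1) =
      (2 * lam - 3) * z.im ^ 2 + (1 - z.re) * (3 + 2 * lam - (2 * lam - 3) * z.re) := by
    simp only [normSq_apply, den, Nat.cast_one, add_re, add_im, mul_re, mul_im, sub_re, sub_im,
      one_re, one_im, ofReal_re, ofReal_im]
    linear_combination (1 - z.re ^ 2 - z.im ^ 2) * lam_sq
  have hfac : 0 ≤ 3 + 2 * lam - (2 * lam - 3) * z.re := by nlinarith
  have hle : normSq ((lam - 1) * z + 1) ≤ normSq (den 1 z) := by
    nlinarith [mul_nonneg (sub_nonneg.2 hlam) (sq_nonneg z.im), mul_nonneg (sub_nonneg.2 hz) hfac]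
  rw [apolF_eq_moeb_one, moeb, norm_div, div_le_one (norm_pos_iff.2 hd)]
  simpa [norm_def] using Real.sqrt_le_sqrt hle

lemma norm_Rot (θ : ℝ) (z : ℂ) : ‖Rot θ z‖ = ‖z‖ := by
  rw [Rot, norm_mul, norm_exp_ofReal_mul_I, one_mul]

lemma hasDerivAt_Rot (θ : ℝ) (z : ℂ) : HasDerivAt (Rot θ) (exp (θ * I)) z :=
  hasDerivAt_const_mul _

lemma re_Rot_apolF_le_one (θ : ℝ) {z : ℂ} (hz : z.re ≤ 1) : (Rot θ (apolF z)).re ≤ 1 :=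
  (re_le_norm _).trans ((norm_Rot θ _).trans_le (norm_apolF_le_one hz))

def phiDerivNorm (θ : ℝ) (n : ℕ) (z : ℂ) : ℝ :=
  3 / ‖den n (Rot θ (apolF z))‖ ^ 2 * (3 / ‖den 1 z‖ ^ 2)

lemma norm_deriv_phi (k n : ℕ) {z : ℂ} (hz : z.re ≤ 1) :
    ‖deriv (phi k n) z‖ = phiDerivNorm (thetaA k) n z := by
  have hf : HasDerivAt apolF (3 / den 1 z ^ 2) z := by
    simpa using hasDerivAt_iterate_apolF 1 hz
  have hφ := (hasDerivAt_Rot (thetaB k) _).comp z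
    ((hasDerivAt_iterate_apolF n (re_Rot_apolF_le_one (thetaA k) hz)).comp z
      ((hasDerivAt_Rot (thetaA k) _).comp z hf))
  rw [phi, hφ.deriv]
  simp [phiDerivNorm, norm_exp_ofReal_mul_I]

lemma three_div_sq_norm_den_le_one (n : ℕ) {z : ℂ} (hz : z.re ≤ 1) : 3 / ‖den n z‖ ^ 2 ≤ 1 := by
  rw [← lam_sq]
  exact div_le_one_of_le₀ (pow_le_pow_left₀ lam_pos.le (lam_le_norm_den n hz) 2) (by positivity)

lemma phiDerivNorm_le_one (θ : ℝ) (n : ℕ) {z : ℂ} (hz : z.re ≤ 1) : phiDerivNorm θ n z ≤ 1 :=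
  mul_le_one₀ (three_div_sq_norm_den_le_one n (re_Rot_apolF_le_one θ hz)) (by positivity)
    (three_div_sq_norm_den_le_one 1 hz)

lemma phiDerivNorm_antitone (θ : ℝ) {z : ℂ} (hz : z.re ≤ 1) :
    Antitone fun n => phiDerivNorm θ n z := by
  intro n₁ n₂ h
  have hw := re_Rot_apolF_le_one θ hz
  have hpos : 0 < ‖den n₁ (Rot θ (apolF z))‖ := lam_pos.trans_le (lam_le_norm_den n₁ hw)
  show phiDerivNorm θ n₂ z ≤ phiDerivNorm θ n₁ z
  unfold phiDerivNorm
  gcongr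
  exact norm_den_mono h hw

lemma phiDerivNorm_neg (θ : ℝ) (n : ℕ) (z : ℂ) :
    phiDerivNorm (-θ) n z = phiDerivNorm θ n (conj z) := by
  have hden : ∀ m w, den m (conj w) = conj (den m w) := by
    simp [den, conj_ofReal]
  have happ : apolF (conj z) = conj (apolF z) := by
    simp [apolF, conj_ofReal]
  have hrot : Rot (-θ) (apolF z) = conj (Rot θ (apolF (conj z))) := by
    rw [Rot, Rot, happ, map_mul, conj_conj, ← exp_conj]
    simp [conj_ofReal, conj_I]
  simp only [phiDerivNorm, hrot, hden, norm_conj]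

lemma re_le_one_of_mem_unitD {z : ℂ} (hz : z ∈ unitD) : z.re ≤ 1 :=
  (re_le_norm z).trans (by simpa [unitD] using hz)

lemma image_phiDerivNorm_neg (θ : ℝ) (n : ℕ) :
    phiDerivNorm (-θ) n '' unitD = phiDerivNorm θ n '' unitD := by
  have hconj : conj '' unitD = unitD :=
    (conjLIE.image_closedBall 0 1).trans (by rw [map_zero, unitD])
  rw [show phiDerivNorm (-θ) n = phiDerivNorm θ n ∘ conj from funext (phiDerivNorm_neg θ n),
    image_comp, hconj]

lemma Dnorm_eq_sSup (k n : ℕ) : Dnorm k n = sSup (phiDerivNorm (thetaA k) n '' unitD) := by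
  rw [Dnorm]
  congr 1
  exact image_congr fun z hz => norm_deriv_phi k n (re_le_one_of_mem_unitD hz)

lemma thetaA_eq_or_eq_neg (k₁ k₂ : ℕ) : thetaA k₂ = thetaA k₁ ∨ thetaA k₂ = -thetaA k₁ := by
  simp only [thetaA]
  rcases neg_one_pow_eq_or ℝ k₁ with h₁ | h₁ <;> rcases neg_one_pow_eq_or ℝ k₂ with h₂ | h₂ <;>
    simp [h₁, h₂]

lemma Dnorm_indep (k₁ k₂ n : ℕ) : Dnorm k₁ n = Dnorm k₂ n := by
  rw [Dnorm_eq_sSup, Dnorm_eq_sSup]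
  rcases thetaA_eq_or_eq_neg k₁ k₂ with h | h <;> rw [h]
  rw [image_phiDerivNorm_neg]

lemma Dnorm_antitone (k : ℕ) : Antitone (Dnorm k) := by
  intro n₁ n₂ h
  rw [Dnorm_eq_sSup, Dnorm_eq_sSup]
  have hbdd : BddAbove (phiDerivNorm (thetaA k) n₁ '' unitD) :=
    ⟨1, forall_mem_image.2 fun z hz => phiDerivNorm_le_one _ _ (re_le_one_of_mem_unitD hz)⟩
  refine csSup_le ((nonempty_closedBall.2 zero_le_one).image _) (forall_mem_image.2 fun z hz => ?_)
  exact (phiDerivNorm_antitone _ (re_le_one_of_mem_unitD hz) h).trans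
    (le_csSup hbdd (mem_image_of_mem _ hz))

/-- Ordering the Apollonian alphabet by the index n is natural: ‖φ'_{k,n}‖_∞ is
independent of k and non-increasing in n. -/
theorem apollonian_natural_order :
    (∀ k₁ k₂ n : ℕ, 1 ≤ k₁ → k₁ ≤ 6 → 1 ≤ k₂ → k₂ ≤ 6 → 1 ≤ n →
      Dnorm k₁ n = Dnorm k₂ n) ∧
    (∀ k₁ k₂ n₁ n₂ : ℕ, 1 ≤ k₁ → k₁ ≤ 6 → 1 ≤ k₂ → k₂ ≤ 6 → 1 ≤ n₁ → n₁ ≤ n₂ →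
      Dnorm k₂ n₂ ≤ Dnorm k₁ n₁) :=
  ⟨fun k₁ k₂ n _ _ _ _ _ => Dnorm_indep k₁ k₂ n,
    fun k₁ k₂ _ _ _ _ _ _ _ h => (Dnorm_indep k₂ k₁ _).trans_le (Dnorm_antitone k₁ h)⟩

end
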